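/- arXiv:1306.4175 — 6 statements merged into one kernel-verified Lean document; each statement's English description precedes it below -/
import Mathlib

section
/- In Lu's coordinates y_1, …, y_n on the big cell of ℂP^n (defined by y_n = z_n and y_i = z_i / √(1 + Σ_{i<j≤n} |z_j|^2) where z_i = X_i/X_{n+1}), the function c_k satisfies c_k = 1 − Π_{i=1}^k (1 + |y_i|^2)^{−1}. -/
theorem stmt_7 (n : ℕ) (z : Fin n → ℂ)
    (y : Fin n → ℂ)
    (hy : ∀ i, y i = z i /
      (Real.sqrt (1 + ∑ j : Fin n, if (i:ℕ) < (j:ℕ) then ‖z j‖^2 else 0) : ℂ)) :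
    ∀ k : ℕ, k ≤ n →
      (∑ j : Fin n, if (j:ℕ) < k then ‖z j‖^2 else 0) / (1 + ∑ j : Fin n, ‖z j‖^2) =
        1 - ∏ i : Fin n, if (i:ℕ) < k then (1 + ‖y i‖^2)⁻¹ else 1 := by
  set T : ℕ → ℝ := fun m => 1 + ∑ j : Fin n, if m ≤ (j:ℕ) then ‖z j‖^2 else 0 with hT
  have hsum : ∀ m, 0 ≤ ∑ j : Fin n, if m ≤ (j:ℕ) then ‖z j‖^2 else 0 := by
    intro m
    exact Finset.sum_nonneg fun j _ => by positivity
  have hTpos : ∀ m, 0 < T m := by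
    intro m
    have := hsum m
    simp only [hT]
    linarith
  have hTstep : ∀ i : Fin n, T (i:ℕ) = T ((i:ℕ)+1) + ‖z i‖^2 := by
    intro i
    simp only [hT]
    have hpt : ∀ j : Fin n, (if (i:ℕ) ≤ (j:ℕ) then ‖z j‖^2 else 0)
        = (if (i:ℕ)+1 ≤ (j:ℕ) then ‖z j‖^2 else 0) + (if j = i then ‖z j‖^2 else 0) := by
      intro j
      rcases lt_trichotomy (i:ℕ) (j:ℕ) with h|h|h
      · have hne : j ≠ i := by
          intro hji; rw [hji] at h; exact lt_irrefl _ h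
        simp [Nat.le_of_lt h, Nat.succ_le_of_lt h, hne]
      · have hji : j = i := Fin.ext h.symm
        simp [hji, le_refl, Nat.not_succ_le_self]
      · have hne : j ≠ i := by
          intro hji; rw [hji] at h; exact lt_irrefl _ h
        have h2 : ¬((i:ℕ)+1 ≤ (j:ℕ)) := by omega
        simp [Nat.not_le_of_lt h, hne, h2]
    rw [Finset.sum_congr rfl (fun j _ => hpt j), Finset.sum_add_distrib]
    rw [Finset.sum_ite_eq' Finset.univ i (fun j => ‖z j‖^2)]
    simp [add_assoc]
  have hfac : ∀ i : Fin n, (1 + ‖y i‖^2)⁻¹ = T ((i:ℕ)+1) / T (i:ℕ) := by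
    intro i
    have hden : (1 + ∑ j : Fin n, if (i:ℕ) < (j:ℕ) then ‖z j‖^2 else 0) = T ((i:ℕ)+1) := by
      simp only [hT, Nat.lt_iff_add_one_le]
    have hyi : ‖y i‖^2 = ‖z i‖^2 / T ((i:ℕ)+1) := by
      rw [hy i, hden]
      rw [norm_div, Complex.norm_real, Real.norm_eq_abs,
        abs_of_nonneg (Real.sqrt_nonneg _), div_pow, Real.sq_sqrt (hTpos _).le]
    have h1 : 1 + ‖y i‖^2 = T (i:ℕ) / T ((i:ℕ)+1) := by
      rw [hyi, hTstep i]
      field_simp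
      rw [add_div, div_self (hTpos _).ne']
    rw [h1, inv_div]
  have hprod : ∀ k : ℕ, k ≤ n →
      (∏ i : Fin n, if (i:ℕ) < k then (1 + ‖y i‖^2)⁻¹ else 1) = T k / T 0 := by
    intro k
    induction k with
    | zero => intro _; simp [div_self (hTpos 0).ne']
    | succ k ih =>
      intro hk
      have hkn : k < n := hk
      have hk' : k ≤ n := Nat.le_of_lt hkn
      have hpt : ∀ i : Fin n, (if (i:ℕ) < k+1 then (1 + ‖y i‖^2)⁻¹ else 1)
          = (if (i:ℕ) < k then (1 + ‖y i‖^2)⁻¹ else 1)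
            * (if i = ⟨k, hkn⟩ then (1 + ‖y i‖^2)⁻¹ else 1) := by
        intro i
        rcases lt_trichotomy (i:ℕ) k with h|h|h
        · have hne : i ≠ ⟨k, hkn⟩ := by
            intro hik; rw [hik] at h; exact lt_irrefl _ h
          simp [h, Nat.lt_succ_of_lt h, hne]
        · have hik : i = ⟨k, hkn⟩ := Fin.ext h
          simp [hik, Nat.lt_irrefl, Nat.lt_succ_self]
        · have hne : i ≠ ⟨k, hkn⟩ := by
            intro hik; rw [hik] at h; exact lt_irrefl _ h
          simp [Nat.not_lt_of_lt h, hne, Nat.lt_succ_iff, Nat.not_le_of_lt h]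
      rw [Finset.prod_congr rfl (fun i _ => hpt i), Finset.prod_mul_distrib, ih hk',
        Finset.prod_ite_eq' Finset.univ (⟨k, hkn⟩ : Fin n) (fun i => (1 + ‖y i‖^2)⁻¹)]
      simp only [Finset.mem_univ, if_true]
      rw [hfac ⟨k, hkn⟩]
      have h0 := (hTpos 0).ne'
      have hkpos := (hTpos k).ne'
      field_simp
  intro k hk
  rw [hprod k hk]
  have hT0 : T 0 = 1 + ∑ j : Fin n, ‖z j‖^2 := by
    simp [hT]
  have hdiff : T 0 - T k = ∑ j : Fin n, if (j:ℕ) < k then ‖z j‖^2 else 0 := by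
    simp only [hT]
    have hptd : ∀ j : Fin n, (if 0 ≤ (j:ℕ) then ‖z j‖^2 else 0) - (if k ≤ (j:ℕ) then ‖z j‖^2 else 0)
        = if (j:ℕ) < k then ‖z j‖^2 else 0 := by
      intro j
      rcases lt_or_ge (j:ℕ) k with h|h
      · simp [h, Nat.not_le_of_lt h]
      · simp [h, Nat.not_lt_of_le h]
    rw [add_sub_add_left_eq_sub, ← Finset.sum_sub_distrib,
      Finset.sum_congr rfl (fun j _ => hptd j)]
  rw [← hT0, ← hdiff, eq_sub_iff_add_eq]
  field_simp
  rw [sub_add_cancel, div_self (hTpos 0).ne']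
end

section
/- The inverse change of coordinates from affine coordinates z to Lu coordinates y on the big cell of ℂP^n is given by: given y ∈ ℂ^n, the unique z with y_i = z_i/√(1 + Σ_{j>i}|z_j|^2) (and y_n = z_n) satisfies z_i = y_i · Π_{j=i+1}^n √(1+|y_j|^2); in particular the map z ↦ y is a bijection of ℂ^n onto itself. -/
lemma tele_prod (g : ℕ → ℝ) (hg : ∀ m, g m ≠ 0) (t s : ℕ) (h : s ≤ t) :
    ∏ j ∈ Finset.Ico s t, (g j / g (j+1)) = g s / g t := by
  induction t, h using Nat.le_induction with
  | base => simp [div_self (hg s)]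
  | succ t ht ih =>
      rw [Finset.prod_Ico_succ_top ht, ih]
      field_simp
      rw [mul_comm (g t) (g (t+1)), mul_div_mul_right _ _ (hg t)]

lemma sum_prod_tele (f : ℕ → ℝ) (t s : ℕ) (h : s ≤ t) :
    1 + ∑ j ∈ Finset.Ico s t, f j * ∏ k ∈ Finset.Ico (j+1) t, (1 + f k)
      = ∏ j ∈ Finset.Ico s t, (1 + f j) := by
  induction t, h using Nat.le_induction with
  | base => simp
  | succ t ht ih =>
      rw [Finset.prod_Ico_succ_top ht, Finset.sum_Ico_succ_top ht]
      have h1 : ∀ j ∈ Finset.Ico s t, f j * ∏ k ∈ Finset.Ico (j+1) (t+1), (1+f k)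
          = (f j * ∏ k ∈ Finset.Ico (j+1) t, (1+f k)) * (1+f t) := by
        intro j hj
        rw [Finset.prod_Ico_succ_top (Finset.mem_Ico.mp hj).2]
        ring
      rw [Finset.sum_congr rfl h1, ← Finset.sum_mul, Finset.Ico_self, Finset.prod_empty]
      linear_combination (1 + f t) * ih

lemma sum_if_Ico {M : Type*} [AddCommMonoid M] (n i : ℕ) (f : ℕ → M) :
    ∑ j ∈ Finset.range n, (if i < j then f j else 0) = ∑ j ∈ Finset.Ico (i+1) n, f j := by
  rw [← Finset.sum_filter]
  apply Finset.sum_congr _ (fun _ _ => rfl)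
  ext j; simp [Finset.mem_filter, Finset.mem_Ico]; omega

lemma prod_if_Ico {M : Type*} [CommMonoid M] (n i : ℕ) (f : ℕ → M) :
    ∏ j ∈ Finset.range n, (if i < j then f j else 1) = ∏ j ∈ Finset.Ico (i+1) n, f j := by
  rw [← Finset.prod_filter]
  apply Finset.prod_congr _ (fun _ _ => rfl)
  ext j; simp [Finset.mem_filter, Finset.mem_Ico]; omega

lemma sum_fin_if {M : Type*} [AddCommMonoid M] (n i : ℕ) (f : ℕ → M) :
    ∑ j : Fin n, (if i < (j:ℕ) then f (j:ℕ) else 0) = ∑ j ∈ Finset.Ico (i+1) n, f j :=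
  (Fin.sum_univ_eq_sum_range (fun m => if i < m then f m else 0) n).trans (sum_if_Ico n i f)

lemma prod_fin_if {M : Type*} [CommMonoid M] (n i : ℕ) (f : ℕ → M) :
    ∏ j : Fin n, (if i < (j:ℕ) then f (j:ℕ) else 1) = ∏ j ∈ Finset.Ico (i+1) n, f j :=
  (Fin.prod_univ_eq_prod_range (fun m => if i < m then f m else 1) n).trans (prod_if_Ico n i f)

lemma sqrt_prod (s : Finset ℕ) (f : ℕ → ℝ) (hf : ∀ j, 0 ≤ f j) :
    Real.sqrt (∏ j ∈ s, f j) = ∏ j ∈ s, Real.sqrt (f j) := by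
  have : ∏ j ∈ s, f j = (∏ j ∈ s, Real.sqrt (f j))^2 := by
    rw [← Finset.prod_pow]
    exact Finset.prod_congr rfl fun j _ => (Real.sq_sqrt (hf j)).symm
  rw [this, Real.sqrt_sq (Finset.prod_nonneg fun j _ => Real.sqrt_nonneg _)]

noncomputable def sq2 (n : ℕ) (z : Fin n → ℂ) (m : ℕ) : ℝ :=
  if h : m < n then ‖z ⟨m,h⟩‖^2 else 0

lemma sq2_nonneg (n : ℕ) (z : Fin n → ℂ) (m : ℕ) : 0 ≤ sq2 n z m := by
  unfold sq2; split <;> positivity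

lemma sq2_coe (n : ℕ) (z : Fin n → ℂ) (j : Fin n) : sq2 n z j = ‖z j‖^2 := by
  simp [sq2, j.isLt]

noncomputable def Gf (n : ℕ) (z : Fin n → ℂ) (m : ℕ) : ℝ :=
  1 + ∑ j ∈ Finset.Ico m n, sq2 n z j

lemma Gf_pos (n : ℕ) (z : Fin n → ℂ) (m : ℕ) : 0 < Gf n z m := by
  have := Finset.sum_nonneg (fun j (_ : j ∈ Finset.Ico m n) => sq2_nonneg n z j)
  unfold Gf; linarith

lemma sum_eq (n : ℕ) (z : Fin n → ℂ) (i : Fin n) :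
    (1 + ∑ j : Fin n, if (i:ℕ) < (j:ℕ) then ‖z j‖^2 else 0) = Gf n z (i+1) := by
  unfold Gf
  congr 1
  have h1 : ∑ j : Fin n, (if (i:ℕ) < (j:ℕ) then ‖z j‖^2 else 0)
      = ∑ j : Fin n, (if (i:ℕ) < (j:ℕ) then sq2 n z (j:ℕ) else 0) := by
    apply Finset.sum_congr rfl
    intro j _
    rw [sq2_coe]
  rw [h1, sum_fin_if n (i:ℕ) (sq2 n z)]

lemma Gf_last (n : ℕ) (z : Fin n → ℂ) : Gf n z n = 1 := by simp [Gf]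

lemma Gf_step (n : ℕ) (z : Fin n → ℂ) (m : ℕ) (hm : m < n) :
    Gf n z m = Gf n z (m+1) + sq2 n z m := by
  unfold Gf
  rw [Finset.sum_eq_sum_Ico_succ_bot hm]
  ring

theorem stmt_8 (n : ℕ)
    (L : (Fin n → ℂ) → (Fin n → ℂ))
    (hL : ∀ z i, L z i = z i /
      (Real.sqrt (1 + ∑ j : Fin n, if (i:ℕ) < (j:ℕ) then ‖z j‖^2 else 0) : ℂ)) :
    (∀ (z : Fin n → ℂ) (i : Fin n),
      z i = L z i * ∏ j : Fin n,
        if (i:ℕ) < (j:ℕ) then (Real.sqrt (1 + ‖L z j‖^2) : ℂ) else 1) ∧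
    Function.Bijective L := by
  have hL' : ∀ z i, L z i = z i / (Real.sqrt (Gf n z (i+1)) : ℂ) := by
    intro z i; rw [hL, sum_eq]
  have sqrtne : ∀ (z : Fin n → ℂ) m, (Real.sqrt (Gf n z m) : ℂ) ≠ 0 := by
    intro z m
    simp only [ne_eq, Complex.ofReal_eq_zero]
    exact ne_of_gt (Real.sqrt_pos.mpr (Gf_pos n z m))
  have normL : ∀ z (j : Fin n), ‖L z j‖^2 = sq2 n z j / Gf n z (j+1) := by
    intro z j
    rw [hL', norm_div, Complex.norm_real, Real.norm_eq_abs,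
      abs_of_nonneg (Real.sqrt_nonneg _), div_pow,
      Real.sq_sqrt (Gf_pos n z (j+1)).le, sq2_coe]
  have part1 : ∀ (z : Fin n → ℂ) (i : Fin n),
      z i = L z i * ∏ j : Fin n,
        if (i:ℕ) < (j:ℕ) then (Real.sqrt (1 + ‖L z j‖^2) : ℂ) else 1 := by
    intro z i
    have h2 : ∏ j : Fin n, (if (i:ℕ) < (j:ℕ) then (Real.sqrt (1 + ‖L z j‖^2) : ℂ) else 1)
        = ∏ j : Fin n, (if (i:ℕ) < (j:ℕ) then
            ((Real.sqrt (Gf n z (j:ℕ) / Gf n z ((j:ℕ)+1)) : ℝ) : ℂ) else 1) := by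
      apply Finset.prod_congr rfl
      intro j _
      by_cases hij : (i:ℕ) < (j:ℕ)
      · rw [if_pos hij, if_pos hij]
        congr 2
        rw [normL, Gf_step n z j j.isLt, add_div,
          div_self (Gf_pos n z ((j:ℕ)+1)).ne']
      · rw [if_neg hij, if_neg hij]
    rw [h2, prod_fin_if n (i:ℕ)
        (fun m => ((Real.sqrt (Gf n z m / Gf n z (m+1)) : ℝ) : ℂ)),
      ← Complex.ofReal_prod]
    have h3 : ∏ j ∈ Finset.Ico ((i:ℕ)+1) n, Real.sqrt (Gf n z j / Gf n z (j+1))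
        = Real.sqrt (Gf n z ((i:ℕ)+1)) := by
      have h4 : ∀ j ∈ Finset.Ico ((i:ℕ)+1) n, Real.sqrt (Gf n z j / Gf n z (j+1))
          = Real.sqrt (Gf n z j) / Real.sqrt (Gf n z (j+1)) :=
        fun j _ => Real.sqrt_div (Gf_pos n z j).le _
      rw [Finset.prod_congr rfl h4,
        tele_prod (fun m => Real.sqrt (Gf n z m))
          (fun m => ne_of_gt (Real.sqrt_pos.mpr (Gf_pos n z m))) n ((i:ℕ)+1) i.isLt,
        Gf_last, Real.sqrt_one, div_one]
    rw [h3, hL', div_mul_cancel₀ _ (sqrtne z ((i:ℕ)+1))]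
  refine ⟨part1, ?_, ?_⟩
  · intro z z' h
    funext i
    rw [part1 z i, part1 z' i, h]
  · intro y
    refine ⟨fun i => y i *
      ((∏ j ∈ Finset.Ico ((i:ℕ)+1) n, Real.sqrt (1 + sq2 n y j) : ℝ) : ℂ), ?_⟩
    set z : Fin n → ℂ := fun i => y i *
      ((∏ j ∈ Finset.Ico ((i:ℕ)+1) n, Real.sqrt (1 + sq2 n y j) : ℝ) : ℂ) with hz
    have hsq2 : ∀ m, sq2 n z m = sq2 n y m * ∏ k ∈ Finset.Ico (m+1) n, (1 + sq2 n y k) := by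
      intro m
      by_cases hm : m < n
      · have hP : (∏ j ∈ Finset.Ico (m+1) n, Real.sqrt (1 + sq2 n y j))^2
            = ∏ k ∈ Finset.Ico (m+1) n, (1 + sq2 n y k) := by
          rw [← Finset.prod_pow]
          exact Finset.prod_congr rfl fun k _ => Real.sq_sqrt (by linarith [sq2_nonneg n y k])
        rw [show sq2 n z m = ‖z ⟨m,hm⟩‖^2 from dif_pos hm,
          show sq2 n y m = ‖y ⟨m,hm⟩‖^2 from dif_pos hm,
          show z ⟨m,hm⟩ = y ⟨m,hm⟩ *
            ((∏ j ∈ Finset.Ico (m+1) n, Real.sqrt (1 + sq2 n y j) : ℝ) : ℂ) from rfl,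
          norm_mul, mul_pow, Complex.norm_real, Real.norm_eq_abs, sq_abs, hP]
      · simp [sq2, hm]
    funext i
    rw [hL']
    have hG : Gf n z ((i:ℕ)+1) = ∏ k ∈ Finset.Ico ((i:ℕ)+1) n, (1 + sq2 n y k) := by
      unfold Gf
      rw [Finset.sum_congr rfl (fun j _ => hsq2 j)]
      exact sum_prod_tele (sq2 n y) n ((i:ℕ)+1) i.isLt
    have hsqrtG : Real.sqrt (Gf n z ((i:ℕ)+1))
        = ∏ k ∈ Finset.Ico ((i:ℕ)+1) n, Real.sqrt (1 + sq2 n y k) := by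
      rw [hG]
      exact sqrt_prod _ _ (fun k => by linarith [sq2_nonneg n y k])
    have hPne : (∏ k ∈ Finset.Ico ((i:ℕ)+1) n, Real.sqrt (1 + sq2 n y k)) ≠ 0 := by
      apply ne_of_gt
      apply Finset.prod_pos
      intro k _
      exact Real.sqrt_pos.mpr (by linarith [sq2_nonneg n y k])
    rw [hsqrtG]
    show y i * ((∏ j ∈ Finset.Ico ((i:ℕ)+1) n, Real.sqrt (1 + sq2 n y j) : ℝ) : ℂ)
        / ((∏ k ∈ Finset.Ico ((i:ℕ)+1) n, Real.sqrt (1 + sq2 n y k) : ℝ) : ℂ) = y i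
    rw [mul_div_assoc, div_self (by exact_mod_cast hPne), mul_one]
end

section
/- For t = 0, the set G = {(c,h) ∈ Δ_n × ℝ^n : r(c,h) ∈ Δ_n, and for all i, c_i = 1 implies h_i = 0} (with r(c,h)_i = 1 + e^{−h_i}(c_i − 1)) is closed under the action groupoid operations: units, inversion, and composition. -/
theorem stmt_12 (n : ℕ)
    (r : (Fin n → ℝ) → (Fin n → ℝ) → (Fin n → ℝ))
    (hr : ∀ c h i, r c h i = 1 + Real.exp (-h i) * (c i - 1))
    (Δ : Set (Fin n → ℝ))
    (hΔ : Δ = {c | (∀ i j : Fin n, i ≤ j → c i ≤ c j) ∧ ∀ i, 0 ≤ c i ∧ c i ≤ 1})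
    (G : Set ((Fin n → ℝ) × (Fin n → ℝ)))
    (hG : G = {p | p.1 ∈ Δ ∧ r p.1 p.2 ∈ Δ ∧ ∀ i, p.1 i = 1 → p.2 i = 0}) :
    (∀ c ∈ Δ, (c, (0 : Fin n → ℝ)) ∈ G) ∧
    (∀ p ∈ G, (r p.1 p.2, -p.2) ∈ G) ∧
    (∀ c h h', (c, h) ∈ G → (r c h, h') ∈ G → (c, h + h') ∈ G) := by
  subst hG
  have hr0 : ∀ c, r c 0 = c := by
    intro c; funext i; rw [hr]; simp
  refine ⟨?_, ?_, ?_⟩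
  · intro c hc
    exact ⟨hc, by rw [hr0]; exact hc, fun i _ => rfl⟩
  · rintro ⟨c, h⟩ ⟨hc, hrc, hfix⟩
    have key : r (r c h) (-h) = c := by
      funext i
      rw [hr, hr]
      simp [Real.exp_neg]
    refine ⟨hrc, by rw [key]; exact hc, ?_⟩
    intro i hi
    simp only [Pi.neg_apply, neg_eq_zero]
    apply hfix
    simp only at hi
    rw [hr] at hi
    have := Real.exp_pos (-h i)
    nlinarith [hi]
  · rintro c h h' ⟨hc, hrc, hfix⟩ ⟨_, hrr, hfix'⟩
    have key : r c (h + h') = r (r c h) h' := by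
      funext i
      rw [hr, hr, hr]
      simp [neg_add, Real.exp_add]
      ring
    refine ⟨hc, by rw [key]; exact hrr, ?_⟩
    intro i hi
    have h1 : h i = 0 := hfix i hi
    have h2 : h' i = 0 := by
      apply hfix'
      simp only at hi ⊢
      rw [hr, hi, h1]; simp
    simp [Pi.add_apply, h1, h2]
end

section
/- Fix ħ > 0 and t ∈ (0,1). The Bohr-Sommerfeld set G^{bs} = {(c,h) ∈ Δ_n × ℝ^n : r(c,h) ∈ Δ_n; for all i, h_i ∈ ħℤ; for all i with c_i ≠ 1−t, log|c_i − 1 + t| ∈ ħℤ; and (c_i = c_{i+1} = 1−t) ⟹ h_i = h_{i+1}} is a subgroupoid: it is closed under units (c,0) for admissible c, inversion, and composition of the action groupoid; in particular if (c,h) ∈ G^{bs} then also log|r(c,h)_i − 1 + t| ∈ ħℤ for all i with r(c,h)_i ≠ 1−t. -/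
theorem stmt_13 (n : ℕ) (t hbar : ℝ) (ht : t ∈ Set.Ioo (0:ℝ) 1) (hhbar : 0 < hbar)
    (r : (Fin n → ℝ) → (Fin n → ℝ) → (Fin n → ℝ))
    (hr : ∀ c h i, r c h i = 1 - t + Real.exp (-h i) * (c i + t - 1))
    (Δ : Set (Fin n → ℝ))
    (hΔ : Δ = {c | (∀ i j : Fin n, i ≤ j → c i ≤ c j) ∧ ∀ i, 0 ≤ c i ∧ c i ≤ 1})
    (G : Set ((Fin n → ℝ) × (Fin n → ℝ)))
    (hG : G = {p | p.1 ∈ Δ ∧ r p.1 p.2 ∈ Δ ∧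
      (∀ i, ∃ m : ℤ, p.2 i = hbar * m) ∧
      (∀ i, p.1 i ≠ 1 - t → ∃ m : ℤ, Real.log |p.1 i - 1 + t| = hbar * m) ∧
      ∀ i j : Fin n, (j:ℕ) = (i:ℕ) + 1 → p.1 i = 1 - t → p.1 j = 1 - t → p.2 i = p.2 j}) :
    (∀ c ∈ Δ, (∀ i, c i ≠ 1 - t → ∃ m : ℤ, Real.log |c i - 1 + t| = hbar * m) →
      (c, (0 : Fin n → ℝ)) ∈ G) ∧
    (∀ p ∈ G, (r p.1 p.2, -p.2) ∈ G) ∧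
    (∀ c h h', (c, h) ∈ G → (r c h, h') ∈ G → (c, h + h') ∈ G) ∧
    (∀ p ∈ G, ∀ i, r p.1 p.2 i ≠ 1 - t →
      ∃ m : ℤ, Real.log |r p.1 p.2 i - 1 + t| = hbar * m) := by
  have key : ∀ c h i, r c h i - 1 + t = Real.exp (-h i) * (c i - 1 + t) := by
    intro c h i; rw [hr]; ring
  have heq1t : ∀ c (h : Fin n → ℝ) i, r c h i = 1 - t ↔ c i = 1 - t := by
    intro c h i
    constructor <;> intro hh
    · have hk := key c h i
      rw [hh] at hk
      have h0 : Real.exp (-h i) * (c i - 1 + t) = 0 := by linarith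
      rcases mul_eq_zero.1 h0 with h1 | h1
      · exact absurd h1 (Real.exp_ne_zero _)
      · linarith
    · have hk := key c h i
      rw [hh] at hk
      have : (1 - t : ℝ) - 1 + t = 0 := by ring
      rw [this, mul_zero] at hk
      linarith
  have hlog : ∀ c (h : Fin n → ℝ) i, c i ≠ 1 - t →
      Real.log |r c h i - 1 + t| = -h i + Real.log |c i - 1 + t| := by
    intro c h i hc
    have hne : |c i - 1 + t| ≠ 0 := by
      rw [abs_ne_zero]; intro h0; apply hc; linarith
    rw [key, abs_mul, abs_of_pos (Real.exp_pos _),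
      Real.log_mul (Real.exp_ne_zero _) hne, Real.log_exp]
  have hcomp : ∀ c h h', r (r c h) h' = r c (h + h') := by
    intro c h h'
    funext i
    rw [hr, hr, hr]
    have e : Real.exp (-(h + h') i) = Real.exp (-h' i) * Real.exp (-h i) := by
      rw [← Real.exp_add]
      congr 1
      simp only [Pi.add_apply]; ring
    rw [e]; ring
  have hid : ∀ c, r c 0 = c := by
    intro c; funext i
    rw [hr]
    simp
  have hinv : ∀ c h, r (r c h) (-h) = c := by
    intro c h
    rw [hcomp]
    simp [hid]
  subst hΔ hG
  -- part 4 as a lemma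
  have part4 : ∀ (c h : Fin n → ℝ), (∀ i, ∃ m : ℤ, h i = hbar * m) →
      (∀ i, c i ≠ 1 - t → ∃ m : ℤ, Real.log |c i - 1 + t| = hbar * m) →
      ∀ i, r c h i ≠ 1 - t →
      ∃ m : ℤ, Real.log |r c h i - 1 + t| = hbar * m := by
    intro c h hint hlogc i hri
    have hci : c i ≠ 1 - t := fun h0 => hri ((heq1t c h i).2 h0)
    obtain ⟨m, hm⟩ := hlogc i hci
    obtain ⟨m', hm'⟩ := hint i
    refine ⟨m - m', ?_⟩
    rw [hlog c h i hci, hm, hm']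
    push_cast; ring
  refine ⟨?_, ?_, ?_, fun p hp => part4 p.1 p.2 hp.2.2.1 hp.2.2.2.1⟩
  · -- units
    intro c hc hlogc
    refine ⟨hc, ?_, fun i => ⟨0, by simp⟩, hlogc, fun i j _ _ _ => rfl⟩
    rw [hid]; exact hc
  · -- inversion
    rintro ⟨c, h⟩ hp
    obtain ⟨hc, hrc, hint, hlogc, hlast⟩ := hp
    refine ⟨hrc, ?_, ?_, ?_, ?_⟩
    · show r (r c h) (-h) ∈ _
      rw [hinv]; exact hc
    · intro i
      obtain ⟨m, hm⟩ := hint i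
      have hm' : h i = hbar * m := hm
      refine ⟨-m, ?_⟩
      simp only [Pi.neg_apply]
      push_cast
      linarith
    · exact fun i hi => part4 c h hint hlogc i hi
    · intro i j hij hi hj
      have hi' := (heq1t c h i).1 hi
      have hj' := (heq1t c h j).1 hj
      have hh : h i = h j := hlast i j hij hi' hj'
      simp only [Pi.neg_apply]
      rw [hh]
  · -- composition
    rintro c h h' ⟨hc, hrc, hint, hlogc, hlast⟩ ⟨hc2, hrc2, hint2, hlogc2, hlast2⟩
    refine ⟨hc, ?_, ?_, hlogc, ?_⟩
    · show r c (h + h') ∈ _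
      rw [← hcomp]; exact hrc2
    · intro i
      obtain ⟨m, hm⟩ := hint i
      obtain ⟨m', hm'⟩ := hint2 i
      have h1 : h i = hbar * m := hm
      have h2 : h' i = hbar * m' := hm'
      refine ⟨m + m', ?_⟩
      simp only [Pi.add_apply]
      push_cast
      linarith
    · intro i j hij hi hj
      have h1 : h i = h j := hlast i j hij hi hj
      have h2 : h' i = h' j := hlast2 i j hij ((heq1t c h i).2 hi) ((heq1t c h j).2 hj)
      simp only [Pi.add_apply]
      rw [h1, h2]
end

section
/- Let G^{bs}_1(t) (for n = 1, ħ > 0, t ∈ (0,1)) have three components: G^{(1,0)} = {(q,p) ∈ ℤ×ℤ : q ≥ q_t, q+p ≥ q_t}, G^{(0,1)} = {(q,p) ∈ ℤ×ℤ : q ≥ q̃_t, q+p ≥ q̃_t}, G^{(0,0)} = {(∞,p) : p ∈ ℤ} (where q_t = −(1/ħ)log(1−t), q̃_t = −(1/ħ)log t, interpreted via ceiling to the integer lattice as stated), viewed as a groupoid with source q, target q+p (∞+p = ∞), composition adding p's. Let 𝔊 = {(j,j,k_1,k_2) ∈ ℤ²×(ℤ∪{∞})² : k_1 ≥ 0 or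 k_1 = ∞, k_2 ≥ 0 or k_2 = ∞, j+k_i ≥ 0 where finite, and k_1 = ∞ or k_2 = ∞} with the analogous action-groupoid structure. Then the map Φ sending (q,p) ∈ G^{(1,0)} to (p,p,∞,q−q_t), (q,p) ∈ G^{(0,1)} to (p,p,q−q̃_t,∞), and (∞,p) to (p,p,∞,∞), is a groupoid isomorphism from G^{bs}_1(t) onto 𝔊. -/
theorem stmt_16 (t hbar : ℝ) (ht : t ∈ Set.Ioo (0:ℝ) 1) (hhbar : 0 < hbar)
    (qt qtt : ℤ)
    (hqt : Real.exp (-(hbar * qt)) = 1 - t)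
    (hqtt : Real.exp (-(hbar * qtt)) = t)
    (C : Set (Fin 3 × WithTop ℤ × ℤ))
    (hC : C = {x | (x.1 = 0 → ∃ q : ℤ, x.2.1 = (q : WithTop ℤ) ∧ qt ≤ q ∧ qt ≤ q + x.2.2) ∧
                   (x.1 = 1 → ∃ q : ℤ, x.2.1 = (q : WithTop ℤ) ∧ qtt ≤ q ∧ qtt ≤ q + x.2.2) ∧
                   (x.1 = 2 → x.2.1 = ⊤)})
    (Sheu : Set ((ℤ × ℤ) × (WithTop ℤ × WithTop ℤ)))
    (hSheu : Sheu = {y | y.1.1 = y.1.2 ∧ 0 ≤ y.2.1 ∧ 0 ≤ y.2.2 ∧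
        0 ≤ y.2.1 + (y.1.1 : WithTop ℤ) ∧ 0 ≤ y.2.2 + (y.1.2 : WithTop ℤ) ∧
        (y.2.1 = ⊤ ∨ y.2.2 = ⊤)})
    (Φ : Fin 3 × WithTop ℤ × ℤ → (ℤ × ℤ) × (WithTop ℤ × WithTop ℤ))
    (hΦ : ∀ x, Φ x = ((x.2.2, x.2.2),
      if x.1 = 0 then (⊤, x.2.1 + ((-qt : ℤ) : WithTop ℤ))
      else if x.1 = 1 then (x.2.1 + ((-qtt : ℤ) : WithTop ℤ), ⊤)
      else (⊤, ⊤))) :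
    Set.BijOn Φ C Sheu ∧
    (∀ (l : Fin 3) (q : WithTop ℤ) (p p' : ℤ),
      (l, q, p) ∈ C → (l, q + (p : WithTop ℤ), p') ∈ C →
      Φ (l, q, p + p') =
        (((Φ (l, q, p)).1.1 + (Φ (l, q + (p : WithTop ℤ), p')).1.1,
          (Φ (l, q, p)).1.2 + (Φ (l, q + (p : WithTop ℤ), p')).1.2),
         (Φ (l, q, p)).2)) := by
  subst hC hSheu
  have key : ∀ l : Fin 3, l = 0 ∨ l = 1 ∨ l = 2 := by decide
  have ne20 : ¬((2 : Fin 3) = 0) := by decide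
  have ne21 : ¬((2 : Fin 3) = 1) := by decide
  have ne01 : ¬((0 : Fin 3) = 1) := by decide
  have ne02 : ¬((0 : Fin 3) = 2) := by decide
  have ne10 : ¬((1 : Fin 3) = 0) := by decide
  have ne12 : ¬((1 : Fin 3) = 2) := by decide
  have topne : ∀ x : ℤ, (⊤ : WithTop ℤ) ≠ (x : WithTop ℤ) := fun x =>
    Ne.symm WithTop.coe_ne_top
  have Φ0 : ∀ (q : WithTop ℤ) (p : ℤ),
      Φ (0, q, p) = ((p, p), (⊤, q + ((-qt : ℤ) : WithTop ℤ))) := fun q p => by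
    rw [hΦ]; rfl
  have Φ1 : ∀ (q : WithTop ℤ) (p : ℤ),
      Φ (1, q, p) = ((p, p), (q + ((-qtt : ℤ) : WithTop ℤ), ⊤)) := fun q p => by
    rw [hΦ]; rfl
  have Φ2 : ∀ (q : WithTop ℤ) (p : ℤ),
      Φ (2, q, p) = ((p, p), (⊤, ⊤)) := fun q p => by
    rw [hΦ]; rfl
  constructor
  · refine ⟨?_, ?_, ?_⟩
    · rintro ⟨l, q, p⟩ ⟨h0, h1, h2⟩
      rcases key l with rfl | rfl | rfl
      · obtain ⟨a, rfl, ha1, ha2⟩ := h0 rfl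
        replace ha2 : qt ≤ a + p := ha2
        rw [Φ0]
        refine ⟨rfl, le_top, ?_, by simp [top_add], ?_, Or.inl rfl⟩
        · show (0 : WithTop ℤ) ≤ (a : WithTop ℤ) + ((-qt : ℤ) : WithTop ℤ)
          exact_mod_cast (by omega : (0:ℤ) ≤ a + -qt)
        · show (0 : WithTop ℤ) ≤ (a : WithTop ℤ) + ((-qt : ℤ) : WithTop ℤ) + (p : WithTop ℤ)
          exact_mod_cast (by omega : (0:ℤ) ≤ a + -qt + p)
      · obtain ⟨a, rfl, ha1, ha2⟩ := h1 rfl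
        replace ha2 : qtt ≤ a + p := ha2
        rw [Φ1]
        refine ⟨rfl, ?_, le_top, ?_, by simp [top_add], Or.inr rfl⟩
        · show (0 : WithTop ℤ) ≤ (a : WithTop ℤ) + ((-qtt : ℤ) : WithTop ℤ)
          exact_mod_cast (by omega : (0:ℤ) ≤ a + -qtt)
        · show (0 : WithTop ℤ) ≤ (a : WithTop ℤ) + ((-qtt : ℤ) : WithTop ℤ) + (p : WithTop ℤ)
          exact_mod_cast (by omega : (0:ℤ) ≤ a + -qtt + p)
      · rw [Φ2]
        exact ⟨rfl, le_top, le_top, by simp [top_add], by simp [top_add], Or.inl rfl⟩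
    · rintro ⟨l, q, p⟩ ⟨h0, h1, h2⟩ ⟨l', q', p'⟩ ⟨h0', h1', h2'⟩ heq
      rcases key l with rfl | rfl | rfl
      · obtain ⟨a, rfl, -, -⟩ := h0 rfl
        rw [Φ0] at heq
        rcases key l' with rfl | rfl | rfl
        · obtain ⟨a', rfl, -, -⟩ := h0' rfl
          rw [Φ0] at heq
          simp only [Prod.mk.injEq] at heq
          obtain ⟨⟨rfl, -⟩, -, h⟩ := heq
          rw [← WithTop.coe_add, ← WithTop.coe_add, WithTop.coe_inj] at h
          simp [show a = a' by omega]
        · obtain ⟨a', rfl, -, -⟩ := h1' rfl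
          rw [Φ1] at heq
          simp only [Prod.mk.injEq, ← WithTop.coe_add] at heq
          first
            | exact absurd heq.2.1 (topne _)
            | exact absurd heq.2.1 WithTop.coe_ne_top
            | exact absurd heq.2.2 (topne _)
            | exact absurd heq.2.2 WithTop.coe_ne_top
        · rw [Φ2] at heq
          simp only [Prod.mk.injEq, ← WithTop.coe_add] at heq
          first
            | exact absurd heq.2.1 (topne _)
            | exact absurd heq.2.1 WithTop.coe_ne_top
            | exact absurd heq.2.2 (topne _)
            | exact absurd heq.2.2 WithTop.coe_ne_top
      · obtain ⟨a, rfl, -, -⟩ := h1 rfl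
        rw [Φ1] at heq
        rcases key l' with rfl | rfl | rfl
        · obtain ⟨a', rfl, -, -⟩ := h0' rfl
          rw [Φ0] at heq
          simp only [Prod.mk.injEq, ← WithTop.coe_add] at heq
          first
            | exact absurd heq.2.1 (topne _)
            | exact absurd heq.2.1 WithTop.coe_ne_top
            | exact absurd heq.2.2 (topne _)
            | exact absurd heq.2.2 WithTop.coe_ne_top
        · obtain ⟨a', rfl, -, -⟩ := h1' rfl
          rw [Φ1] at heq
          simp only [Prod.mk.injEq] at heq
          obtain ⟨⟨rfl, -⟩, h, -⟩ := heq
          rw [← WithTop.coe_add, ← WithTop.coe_add, WithTop.coe_inj] at h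
          simp [show a = a' by omega]
        · rw [Φ2] at heq
          simp only [Prod.mk.injEq, ← WithTop.coe_add] at heq
          first
            | exact absurd heq.2.1 (topne _)
            | exact absurd heq.2.1 WithTop.coe_ne_top
            | exact absurd heq.2.2 (topne _)
            | exact absurd heq.2.2 WithTop.coe_ne_top
      · have hq : q = ⊤ := h2 rfl
        subst hq
        rw [Φ2] at heq
        rcases key l' with rfl | rfl | rfl
        · obtain ⟨a', rfl, -, -⟩ := h0' rfl
          rw [Φ0] at heq
          simp only [Prod.mk.injEq, ← WithTop.coe_add] at heq
          first
            | exact absurd heq.2.1 (topne _)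
            | exact absurd heq.2.1 WithTop.coe_ne_top
            | exact absurd heq.2.2 (topne _)
            | exact absurd heq.2.2 WithTop.coe_ne_top
        · obtain ⟨a', rfl, -, -⟩ := h1' rfl
          rw [Φ1] at heq
          simp only [Prod.mk.injEq, ← WithTop.coe_add] at heq
          first
            | exact absurd heq.2.1 (topne _)
            | exact absurd heq.2.1 WithTop.coe_ne_top
            | exact absurd heq.2.2 (topne _)
            | exact absurd heq.2.2 WithTop.coe_ne_top
        · have hq' : q' = ⊤ := h2' rfl
          subst hq'
          rw [Φ2] at heq
          simp only [Prod.mk.injEq] at heq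
          obtain ⟨⟨rfl, -⟩, -⟩ := heq
          rfl
    · rintro ⟨⟨j1, j2⟩, k1, k2⟩ ⟨hj, hk1, hk2, hk1j, hk2j, htop⟩
      obtain rfl : j1 = j2 := hj
      rcases htop with rfl | rfl
      · rcases k2 with _ | k
        · refine ⟨(2, ⊤, j1), ⟨?_, ?_, ?_⟩, ?_⟩
          · intro h; exact absurd h ne20
          · intro h; exact absurd h ne21
          · intro _; rfl
          · rw [Φ2]; rfl
        · refine ⟨(0, ((k + qt : ℤ) : WithTop ℤ), j1), ⟨?_, ?_, ?_⟩, ?_⟩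
          · rintro -
            have hk2' : (0 : WithTop ℤ) ≤ (k : WithTop ℤ) := hk2
            have hk2j' : (0 : WithTop ℤ) ≤ (k : WithTop ℤ) + ((j1 : ℤ) : WithTop ℤ) := hk2j
            rw [← WithTop.coe_add] at hk2j'
            have h1 : (0:ℤ) ≤ k := by exact_mod_cast hk2'
            have h2 : (0:ℤ) ≤ k + j1 := by exact_mod_cast hk2j'
            refine ⟨k + qt, rfl, by omega, ?_⟩
            show qt ≤ k + qt + j1
            omega
          · intro h; exact absurd h ne01
          · intro h; exact absurd h ne02
          · rw [Φ0, ← WithTop.coe_add, show k + qt + -qt = k by ring]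
            rfl
      · rcases k1 with _ | k
        · refine ⟨(2, ⊤, j1), ⟨?_, ?_, ?_⟩, ?_⟩
          · intro h; exact absurd h ne20
          · intro h; exact absurd h ne21
          · intro _; rfl
          · rw [Φ2]; rfl
        · refine ⟨(1, ((k + qtt : ℤ) : WithTop ℤ), j1), ⟨?_, ?_, ?_⟩, ?_⟩
          · intro h; exact absurd h ne10
          · rintro -
            have hk1' : (0 : WithTop ℤ) ≤ (k : WithTop ℤ) := hk1
            have hk1j' : (0 : WithTop ℤ) ≤ (k : WithTop ℤ) + ((j1 : ℤ) : WithTop ℤ) := hk1j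
            rw [← WithTop.coe_add] at hk1j'
            have h1 : (0:ℤ) ≤ k := by exact_mod_cast hk1'
            have h2 : (0:ℤ) ≤ k + j1 := by exact_mod_cast hk1j'
            refine ⟨k + qtt, rfl, by omega, ?_⟩
            show qtt ≤ k + qtt + j1
            omega
          · intro h; exact absurd h ne12
          · rw [Φ1, ← WithTop.coe_add, show k + qtt + -qtt = k by ring]
            rfl
  · intro l q p p' _ _
    rcases key l with rfl | rfl | rfl
    · rw [Φ0, Φ0, Φ0]
    · rw [Φ1, Φ1, Φ1]
    · rw [Φ2, Φ2, Φ2]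
end

section
/- Define Φ: {(c,h) ∈ ℝ^n × ℝ^n} → ℝ^n × ℝ^n by Φ(c,h) = (j;k) where j_1 = p_1, j_i = p_i − p_{i−1} for i ≥ 2, k_1 = q_1, k_i = q_i − q_{i−1} for i ≥ 2, with c_i = 1 − e^{−ħ q_i} and h_i = ħ p_i (for c_i < 1, ħ > 0). Then Φ intertwines the ℝ^n-action r(c,h)_i = 1 + e^{−h_i}(c_i − 1) with the translation action of ℝ^n: writing Φ(c,h) = (j;k) and Φ(r(c,h), h') = (j';k'), one has k' = k + j (componentwise). -/
theorem stmt_17 (n : ℕ) (hbar : ℝ) (hhbar : 0 < hbar)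
    (c h : Fin n → ℝ) (hc : ∀ i, 0 ≤ c i ∧ c i < 1)
    (r : (Fin n → ℝ) → (Fin n → ℝ) → (Fin n → ℝ))
    (hr : ∀ c h i, r c h i = 1 + Real.exp (-h i) * (c i - 1))
    (q p q' : Fin n → ℝ)
    (hq : ∀ i, q i = -(1/hbar) * Real.log (1 - c i))
    (hp : ∀ i, p i = h i / hbar)
    (hq' : ∀ i, q' i = -(1/hbar) * Real.log (1 - r c h i))
    (d : (Fin n → ℝ) → Fin n → ℝ)
    (hd : ∀ f (i : Fin n), d f i = f i -
      (if (i:ℕ) = 0 then 0 else f ⟨(i:ℕ) - 1, by have := i.isLt; omega⟩)) :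
    ∀ i, d q' i = d q i + d p i := by
  have key : ∀ i, q' i = q i + p i := by
    intro i
    have hpos : 0 < 1 - c i := by linarith [(hc i).2]
    have h1 : 1 - r c h i = Real.exp (-h i) * (1 - c i) := by
      rw [hr]; ring
    rw [hq', h1, Real.log_mul (Real.exp_ne_zero _) (ne_of_gt hpos),
      Real.log_exp, hq, hp]
    field_simp
    ring
  intro i
  rw [hd, hd, hd]
  split <;> simp [key] <;> ring
end
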